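/- Distributed equals centralised: for the N Diners system driven by the same sequence of choice maps, at every step i and for every vertex j: ā[i](j) = a_j[i], c̄[i](j) = c_j[i], and j ↦ k ∈ D[i] iff d⃗_j[i](m) = true and d⃗_k[i](n) = false (where k is the m-th neighbour of j and j the n-th neighbour of k). -/
import Mathlib


inductive Act : Type
  | t | h | e
deriving DecidableEq, Repr

def switch : Act → Act
  | Act.t => Act.h
  | Act.h => Act.e
  | Act.e => Act.t

def fP (a : Act) (b : Bool) : Act := if b then switch a else a

inductive Cmd : Type
  | pass | force (b : Bool)
deriving DecidableEq

def fS (a : Act) (b : Bool) : Cmd → Act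
  | Cmd.pass => fP a b
  | Cmd.force b' => fP a b'

/-- The updated priority relation `dH D a`: edge `j ↦ k` of `D` is reversed when
`a j = e`, or when `a j = t` and `a k = h`; otherwise kept. -/
def dH {V : Type*} (D : V → V → Prop) (a : V → Act) : V → V → Prop :=
  fun j k =>
    (D j k ∧ ¬ (a j = Act.e ∨ (a j = Act.t ∧ a k = Act.h))) ∨
    (D k j ∧ (a k = Act.e ∨ (a k = Act.t ∧ a j = Act.h)))

/-- `D` is a priority map for `E`: it orients each edge of `E` exactly one way. -/
def IsPriorityMap {V : Type*} (E D : V → V → Prop) : Prop :=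
  (∀ j k, D j k → E j k) ∧ (∀ j k, E j k → (D j k ↔ ¬ D k j))

def topD {V : Type*} (E D : V → V → Prop) (j : V) : Prop := ∀ k, E j k → D j k

def ready {V : Type*} (E D : V → V → Prop) (a : V → Act) (j : V) : Prop :=
  a j = Act.h ∧ topD E D j ∧ ∀ k, E j k → a k ≠ Act.e

open scoped Classical in
noncomputable def gH {V : Type*} (E D : V → V → Prop) (a : V → Act) (j : V) : Cmd :=
  if a j = Act.t ∨ a j = Act.e then Cmd.pass
  else if ready E D a j then Cmd.force true else Cmd.force false

/-- One step of the polled dynamics of the philosophers under the hub controller. -/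
noncomputable def nextA {V : Type*} (E D : V → V → Prop) (a : V → Act) (b : V → Bool) :
    V → Act :=
  fun j => fS (a j) (b j) (gH E D a j)

def safe {V : Type*} (E : V → V → Prop) (a : V → Act) : Prop :=
  ∀ j k, E j k → ¬ (a j = Act.e ∧ a k = Act.e)

def Acyclic {V : Type*} (D : V → V → Prop) : Prop :=
  ∀ j, ¬ Relation.TransGen D j j

/-- The local dominance-bit update function. -/
def dL (d : Bool) : Act → Act → Bool
  | Act.t, Act.t => d
  | Act.t, Act.h => false
  | Act.t, Act.e => true
  | Act.h, Act.e => true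
  | Act.h, Act.h => d
  | Act.e, Act.h => false
  | Act.e, Act.t => false
  | Act.h, Act.t => true
  | Act.e, Act.e => d

open scoped Classical in
/-- The local controller's control law for vertex j, reading its own dominance
bits and the activities of itself (at j) and its neighbours. -/
noncomputable def gL {V : Type*} (E : V → V → Prop) (d : V → V → Bool)
    (a : V → Act) (j : V) : Cmd :=
  if a j = Act.t ∨ a j = Act.e then Cmd.pass
  else if (∀ k, E j k → d j k = true) ∧ (∀ k, E j k → a k ≠ Act.e) then Cmd.force true
  else Cmd.force false

open scoped Classical in
lemma gH_eq_gL_of_inv {V : Type*} (E D : V → V → Prop) (d : V → V → Bool) (a : V → Act)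
    (hinv : ∀ j k, E j k → (D j k ↔ d j k = true)) (j : V) :
    gH E D a j = gL E d a j := by
  unfold gH gL
  split
  · rfl
  · rename_i hne
    have hh : a j = Act.h := by cases hja : a j <;> simp_all
    have hready : ready E D a j ↔
        ((∀ k, E j k → d j k = true) ∧ ∀ k, E j k → a k ≠ Act.e) := by
      unfold ready topD
      constructor
      · rintro ⟨-, h1, h2⟩; exact ⟨fun k hk => (hinv j k hk).1 (h1 k hk), h2⟩
      · rintro ⟨h1, h2⟩; exact ⟨hh, fun k hk => (hinv j k hk).2 (h1 k hk), h2⟩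
    split <;> split <;> simp_all

theorem distributed_equals_centralised {N : ℕ} (E : Fin N → Fin N → Prop)
    (hE_irr : ∀ j, ¬ E j j) (hE_symm : ∀ j k, E j k → E k j)
    -- shared choice inputs
    (b : ℕ → Fin N → Bool)
    -- centralised dynamics
    (A : ℕ → Fin N → Act) (C : ℕ → Fin N → Cmd) (Ds : ℕ → Fin N → Fin N → Prop)
    (hA0 : ∀ j, A 0 j = Act.t)
    (hD0 : ∀ j k, Ds 0 j k ↔ (E j k ∧ k < j))
    (hC : ∀ i j, C i j = gH E (Ds i) (A i) j)
    (hAstep : ∀ i j, A (i + 1) j = fS (A i j) (b i j) (C i j))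
    (hDstep : ∀ i, Ds (i + 1) = dH (Ds i) (A (i + 1)))
    -- distributed dynamics: aL j is philosopher j's output, cL j its local
    -- controller's output, and dloc j k is j's dominance bit for neighbour k
    (aL : ℕ → Fin N → Act) (cL : ℕ → Fin N → Cmd) (dloc : ℕ → Fin N → Fin N → Bool)
    (haL0 : ∀ j, aL 0 j = Act.t)
    (hcL0 : ∀ j, cL 0 j = Cmd.pass)
    (hdloc0 : ∀ j k, E j k → dloc 0 j k = decide (k < j))
    (hcL : ∀ i j, cL i j = gL E (dloc i) (aL i) j)
    (haLstep : ∀ i j, aL (i + 1) j = fS (aL i j) (b i j) (cL i j))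
    (hdlocstep : ∀ i j k, E j k →
      dloc (i + 1) j k = dL (dloc i j k) (aL (i + 1) j) (aL (i + 1) k)) :
    ∀ i j, A i j = aL i j ∧ C i j = cL i j ∧
      ∀ k, E j k → (Ds i j k ↔ (dloc i j k = true ∧ dloc i k j = false)) := by
  have key : ∀ i, (∀ j, A i j = aL i j) ∧
      (∀ j k, E j k → (Ds i j k ↔ dloc i j k = true)) ∧
      (∀ j k, E j k → dloc i k j = !dloc i j k) ∧
      safe E (A i) := by
    intro i
    induction i with
    | zero =>
      refine ⟨fun j => by rw [hA0, haL0], fun j k hjk => ?_, fun j k hjk => ?_, ?_⟩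
      · rw [hD0, hdloc0 _ _ hjk]; simp [hjk]
      · rw [hdloc0 _ _ hjk, hdloc0 _ _ (hE_symm _ _ hjk)]
        have hne : j ≠ k := fun h => hE_irr j (h ▸ hjk)
        rcases lt_or_gt_of_ne hne with h | h
        · simp [h, not_lt_of_gt h]
        · simp [h, not_lt_of_gt h]
      · rintro j k hjk ⟨h1, -⟩; rw [hA0] at h1; exact Act.noConfusion h1
    | succ i ih =>
      obtain ⟨ihA, ihD, ihcomp, ihsafe⟩ := ih
      have hAfun : A i = aL i := funext ihA
      have hCeq : ∀ j, C i j = cL i j := by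
        intro j
        rw [hC, hcL, hAfun]
        exact gH_eq_gL_of_inv E (Ds i) (dloc i) (aL i) ihD j
      have hAeq : ∀ j, A (i+1) j = aL (i+1) j := by
        intro j; rw [hAstep, haLstep, ihA, hCeq]
      have hEchar : ∀ j, A (i+1) j = Act.e →
          A i j = Act.e ∨ (A i j = Act.h ∧ ready E (Ds i) (A i) j) := by
        intro j hj
        rw [hAstep, hC] at hj
        unfold gH at hj
        by_cases h1 : A i j = Act.t ∨ A i j = Act.e
        · rw [if_pos h1] at hj
          rcases h1 with h | h
          · rw [h] at hj
            cases hb : b i j <;> rw [hb] at hj <;>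
              simp [fS, fP, switch] at hj
          · exact Or.inl h
        · rw [if_neg h1] at hj
          have hh : A i j = Act.h := by
            cases hja : A i j
            · exact absurd (Or.inl hja) h1
            · rfl
            · exact absurd (Or.inr hja) h1
          by_cases hr : ready E (Ds i) (A i) j
          · exact Or.inr ⟨hh, hr⟩
          · rw [if_neg hr, hh] at hj
            simp [fS, fP] at hj
      have hsafe1 : safe E (A (i+1)) := by
        rintro j k hjk ⟨hj, hk⟩
        rcases hEchar j hj with hje | ⟨hjh, hjr⟩
        · rcases hEchar k hk with hke | ⟨hkh, hkr⟩
          · exact ihsafe j k hjk ⟨hje, hke⟩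
          · exact hkr.2.2 j (hE_symm _ _ hjk) hje
        · rcases hEchar k hk with hke | ⟨hkh, hkr⟩
          · exact hjr.2.2 k hjk hke
          · have h1 := hjr.2.1 k hjk
            have h2 := hkr.2.1 j (hE_symm _ _ hjk)
            have b1 := (ihD j k hjk).1 h1
            have b2 := (ihD k j (hE_symm _ _ hjk)).1 h2
            rw [ihcomp j k hjk, b1] at b2
            simp at b2
      have hcomp1 : ∀ j k, E j k → dloc (i+1) k j = !dloc (i+1) j k := by
        intro j k hjk
        rw [hdlocstep _ _ _ hjk, hdlocstep _ _ _ (hE_symm _ _ hjk),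
            ihcomp j k hjk]
        cases aL (i+1) j <;> cases aL (i+1) k <;> simp [dL]
      have hDd1 : ∀ j k, E j k → (Ds (i+1) j k ↔ dloc (i+1) j k = true) := by
        intro j k hjk
        have hkj := hE_symm _ _ hjk
        have hor : Ds i j k ∨ Ds i k j := by
          rcases Bool.eq_false_or_eq_true (dloc i j k) with hb | hb
          · left; exact (ihD j k hjk).2 hb
          · right
            refine (ihD k j hkj).2 ?_
            rw [ihcomp j k hjk, hb]
            rfl
        have hnot : ¬ (A (i+1) j = Act.e ∧ A (i+1) k = Act.e) := hsafe1 j k hjk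
        rw [hDstep]
        unfold dH
        rw [hdlocstep _ _ _ hjk, ← hAeq j, ← hAeq k]
        have hJK := ihD j k hjk
        have hKJ := ihD k j hkj
        cases hj : A (i+1) j <;> cases hk2 : A (i+1) k <;> simp only [dL]
        · simpa using hJK
        · simp
        · simpa using hor
        · simpa using hor
        · simpa using hJK
        · simpa using hor
        · simp
        · simp
        · exact absurd ⟨hj, hk2⟩ hnot
      refine ⟨hAeq, hDd1, hcomp1, hsafe1⟩
  intro i j
  obtain ⟨kA, kD, kcomp, ksafe⟩ := key i
  refine ⟨kA j, ?_, fun k hjk => ?_⟩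
  · rw [hC, hcL, funext kA]
    exact gH_eq_gL_of_inv E (Ds i) (dloc i) (aL i) kD j
  · rw [kD j k hjk, kcomp j k hjk]
    cases dloc i j k <;> simp
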